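/- Let (Q,R) be a quadratic monomial presentation, let C be a cocomplete circuit, let r be its period, and let C̄ be a cycle in C. Then for the subcomplex k(B⊙Γ)_C of k(B⊙Γ): (1) H_0(k(B⊙Γ)_C) is one-dimensional, spanned by the homology class of (C̄, s(C̄)), and this class is independent of the choice of C̄ in C; (2) H_1(k(B⊙Γ)_C) is one-dimensional, spanned by the class of ĥ(C̄) = Σ_{i=0}^{r−1} (r1(rot^i(C̄)), r2(rot^i(C̄))), which is again independent of the choice of C̄; (3) H_m(k(B⊙Γ)_C) = 0 for all m ≥ 2. -/

import Mathlib

/-!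
Common framework: quivers, paths (as a start vertex together with a list of
composable arrows, listed in order of traversal, so that the paper's path
`c_m ⋯ c_1` corresponds to the list `[c_1, …, c_m]`), gentle and quadratic
monomial presentations, the cochain complex `k(Γ ∥ B)` and the chain complex
`k(B ⊙ Γ)` of the paper.
-/

namespace GentleTT

structure Quiv where
  V : Type
  A : Type
  [fintV : Fintype V]
  [fintA : Fintype A]
  [decV : DecidableEq V]
  [decA : DecidableEq A]
  src : A → V
  tgt : A → V

attribute [instance] Quiv.fintV Quiv.fintA Quiv.decV Quiv.decA

/-- A "path datum": a start vertex together with the list of arrows traversed. -/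
abbrev PathDat (Q : Quiv) := Q.V × List Q.A

def psrc (Q : Quiv) (p : PathDat Q) : Q.V := p.1

def ptgt (Q : Quiv) (p : PathDat Q) : Q.V := p.2.getLast?.elim p.1 Q.tgt

def plen (Q : Quiv) (p : PathDat Q) : ℕ := p.2.length

/-- `p` is a genuine path: consecutive arrows compose, and the recorded start
vertex is the source of the first arrow (if any). -/
def Ok (Q : Quiv) (p : PathDat Q) : Prop :=
  p.2.Chain' (fun a b => Q.tgt a = Q.src b) ∧ ∀ a ∈ p.2.head?, Q.src a = p.1

/-- `p` is a path none of whose length-2 subpaths lies in `R`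
(an element of the basis `B` of `kQ/⟨R⟩`). -/
def InB (Q : Quiv) (R : Set (Q.A × Q.A)) (p : PathDat Q) : Prop :=
  Ok Q p ∧ p.2.Chain' (fun a b => (a, b) ∉ R)

/-- `p` is a path all of whose length-2 subpaths lie in `R` (an element of `Γ`). -/
def InG (Q : Quiv) (R : Set (Q.A × Q.A)) (p : PathDat Q) : Prop :=
  Ok Q p ∧ p.2.Chain' (fun a b => (a, b) ∈ R)

/-- Parallel paths: same source and same target. -/
def Par (Q : Quiv) (p q : PathDat Q) : Prop :=
  psrc Q p = psrc Q q ∧ ptgt Q p = ptgt Q q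

/-- Antiparallel paths: `s(p) = t(q)` and `t(p) = s(q)`. -/
def AntiPar (Q : Quiv) (p q : PathDat Q) : Prop :=
  psrc Q p = ptgt Q q ∧ ptgt Q p = psrc Q q

/-- A cycle: a path of positive length whose source equals its target. -/
def IsCycle (Q : Quiv) (p : PathDat Q) : Prop :=
  Ok Q p ∧ p.2 ≠ [] ∧ psrc Q p = ptgt Q p

/-- Rotation of a cycle: the paper's `rot (c_m ⋯ c_1) = c_{m-1} ⋯ c_1 c_m`
(the last arrow traversed becomes the first one traversed). -/
def rotP (Q : Quiv) (p : PathDat Q) : PathDat Q :=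
  match p.2.getLast? with
  | none => p
  | some a => (Q.src a, a :: p.2.dropLast)

/-- Iterated rotation `rot^i`. -/
def rotI (Q : Quiv) (i : ℕ) (p : PathDat Q) : PathDat Q := (rotP Q)^[i] p

def powL {α : Type} (l : List α) : ℕ → List α
  | 0 => []
  | n + 1 => l ++ powL l n

/-- The `n`-th power `p^n` of a (cyclic) path. -/
def powP (Q : Quiv) (p : PathDat Q) (n : ℕ) : PathDat Q := (p.1, powL p.2 n)

/-- A primitive cycle: a cycle that is not a proper power of another cycle. -/
def IsPrimitive (Q : Quiv) (p : PathDat Q) : Prop :=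
  IsCycle Q p ∧ ∀ (q : PathDat Q) (n : ℕ), IsCycle Q q → 2 ≤ n → p ≠ powP Q q n

/-- The period of a cycle: the least `i ≥ 1` with `rot^i p = p`. -/
noncomputable def periodP (Q : Quiv) (p : PathDat Q) : ℕ :=
  sInf {i : ℕ | 1 ≤ i ∧ rotI Q i p = p}

/-- Two cycles are conjugate (belong to the same circuit) if one is obtained
from the other by iterated rotation. -/
def RotEquiv (Q : Quiv) (p q : PathDat Q) : Prop := ∃ i : ℕ, rotI Q i p = q

/-- A cocomplete cycle: `p² ∈ B`. -/
def Cocomplete (Q : Quiv) (R : Set (Q.A × Q.A)) (p : PathDat Q) : Prop :=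
  IsCycle Q p ∧ InB Q R (powP Q p 2)

/-- A complete cycle: `p² ∈ Γ`. -/
def Complete (Q : Quiv) (R : Set (Q.A × Q.A)) (p : PathDat Q) : Prop :=
  IsCycle Q p ∧ InG Q R (powP Q p 2)

/-- `B`-maximal path: in `B` and not a proper subpath of another element of `B`. -/
def BMax (Q : Quiv) (R : Set (Q.A × Q.A)) (p : PathDat Q) : Prop :=
  InB Q R p ∧ ∀ q : PathDat Q, InB Q R q → p.2 <:+: q.2 → p.2 = q.2

/-- `Γ`-maximal path: in `Γ` and not a proper subpath of another element of `Γ`. -/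
def GMax (Q : Quiv) (R : Set (Q.A × Q.A)) (p : PathDat Q) : Prop :=
  InG Q R p ∧ ∀ q : PathDat Q, InG Q R q → p.2 <:+: q.2 → p.2 = q.2

def Adj (Q : Quiv) (v w : Q.V) : Prop :=
  ∃ a : Q.A, (Q.src a = v ∧ Q.tgt a = w) ∨ (Q.src a = w ∧ Q.tgt a = v)

/-- Connectedness of the underlying graph of the quiver. -/
def Connected (Q : Quiv) : Prop := ∀ v w : Q.V, Relation.ReflTransGen (Adj Q) v w

/-- A quadratic monomial presentation: the relations are paths of length 2. -/
def IsQuadMon (Q : Quiv) (R : Set (Q.A × Q.A)) : Prop :=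
  ∀ r ∈ R, Q.tgt r.1 = Q.src r.2

/-- A gentle presentation. -/
structure IsGentle (Q : Quiv) (R : Set (Q.A × Q.A)) : Prop where
  nonempty : Nonempty Q.V
  connected : Connected Q
  relComposable : ∀ r ∈ R, Q.tgt r.1 = Q.src r.2
  srcLe : ∀ v : Q.V, {a : Q.A | Q.src a = v}.ncard ≤ 2
  tgtLe : ∀ v : Q.V, {a : Q.A | Q.tgt a = v}.ncard ≤ 2
  uniqNotRelAfter : ∀ a : Q.A, {b : Q.A | Q.tgt a = Q.src b ∧ (a, b) ∉ R}.Subsingleton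
  uniqNotRelBefore : ∀ a : Q.A, {c : Q.A | Q.tgt c = Q.src a ∧ (c, a) ∉ R}.Subsingleton
  uniqRelAfter : ∀ a : Q.A, {b : Q.A | Q.tgt a = Q.src b ∧ (a, b) ∈ R}.Subsingleton
  uniqRelBefore : ∀ a : Q.A, {c : Q.A | Q.tgt c = Q.src a ∧ (c, a) ∈ R}.Subsingleton

/-- A spanning tree of the (finite, connected) quiver `Q`: a set of arrows
which connects all vertices and has exactly `|Q₀| - 1` elements. -/
def IsSpanningTree (Q : Quiv) (T : Set Q.A) : Prop :=
  (∀ v w : Q.V, Relation.ReflTransGen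
      (fun x y => ∃ a ∈ T, (Q.src a = x ∧ Q.tgt a = y) ∨ (Q.src a = y ∧ Q.tgt a = x)) v w) ∧
  T.ncard + 1 = Fintype.card Q.V

/-- A set of representatives, one for each rotation class of cycles
satisfying `Pred`. -/
def IsRepSet (Q : Quiv) (P : Set (PathDat Q)) (Pred : PathDat Q → Prop) : Prop :=
  (∀ p ∈ P, Pred p) ∧ ∀ q : PathDat Q, Pred q → ∃! p, p ∈ P ∧ RotEquiv Q q p

/-- `S` is a valid choice of the paper's set `Crep` for the predicate `Pred`
(e.g. cocompleteness, or completeness): it consists of all positive powers of a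
chosen set of representatives of the rotation classes of primitive cycles
satisfying `Pred`. -/
def IsCrep (Q : Quiv) (S : Set (PathDat Q)) (Pred : PathDat Q → Prop) : Prop :=
  ∃ P : Set (PathDat Q),
    IsRepSet Q P (fun p => IsPrimitive Q p ∧ Pred p) ∧
    S = {x | ∃ p ∈ P, ∃ n : ℕ, 1 ≤ n ∧ x = powP Q p n}

/-! ### The cochain complex `k(Γ ∥ B)` -/

/-- Membership in the degree-`m` basis `Γ_m ∥ B` of the cochain complex. -/
def GBmem (Q : Quiv) (R : Set (Q.A × Q.A)) (m : ℕ) (x : PathDat Q × PathDat Q) : Prop :=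
  InG Q R x.1 ∧ plen Q x.1 = m ∧ InB Q R x.2 ∧ Par Q x.1 x.2

abbrev GB (Q : Quiv) (R : Set (Q.A × Q.A)) (m : ℕ) :=
  {x : PathDat Q × PathDat Q // GBmem Q R m x}

/-- The degree-`m` component of the cochain complex `k(Γ ∥ B)`. -/
abbrev Coch (k : Type) [Field k] (Q : Quiv) (R : Set (Q.A × Q.A)) (m : ℕ) :=
  GB Q R m →₀ k

/-- The basis vector of `k(Γ_m ∥ B)` attached to a raw pair of path data
(and `0` if the pair is not in `Γ_m ∥ B`). -/
noncomputable def bv (k : Type) [Field k] (Q : Quiv) (R : Set (Q.A × Q.A)) (m : ℕ)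
    (x : PathDat Q × PathDat Q) : Coch k Q R m := by
  classical
  exact if h : GBmem Q R m x then Finsupp.single (⟨x, h⟩ : GB Q R m) (1 : k) else 0

/-- Extension on the left (in the paper's notation): `p ↦ b p`. -/
def extL (Q : Quiv) (b : Q.A) (p : PathDat Q) : PathDat Q := (p.1, p.2 ++ [b])

/-- Extension on the right (in the paper's notation): `p ↦ p a`. -/
def extR (Q : Quiv) (a : Q.A) (p : PathDat Q) : PathDat Q := (Q.src a, a :: p.2)

/-- The differential on a basis element:
`d^m (γ, α) = Σ_b (bγ, bα) - (-1)^m Σ_a (γa, αa)`. -/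
noncomputable def dB (k : Type) [Field k] (Q : Quiv) (R : Set (Q.A × Q.A)) (m : ℕ)
    (x : GB Q R m) : Coch k Q R (m + 1) := by
  classical
  exact
    (∑ b : Q.A,
      if h : GBmem Q R (m + 1) (extL Q b x.val.1, extL Q b x.val.2) then
        Finsupp.single (⟨_, h⟩ : GB Q R (m + 1)) (1 : k) else 0)
    - ((-1 : k) ^ m) •
      (∑ a : Q.A,
        if h : Q.tgt a = psrc Q x.val.1 ∧
            GBmem Q R (m + 1) (extR Q a x.val.1, extR Q a x.val.2) then
          Finsupp.single (⟨_, h.2⟩ : GB Q R (m + 1)) (1 : k) else 0)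

/-- The differential `d^m : k(Γ_m ∥ B) → k(Γ_{m+1} ∥ B)`. -/
noncomputable def dLin (k : Type) [Field k] (Q : Quiv) (R : Set (Q.A × Q.A)) (m : ℕ) :
    Coch k Q R m →ₗ[k] Coch k Q R (m + 1) :=
  Finsupp.linearCombination k (dB k Q R m)

/-- The element `𝟙 = Σ_{i ∈ Q₀} (e_i, e_i)` (placed in degree `m`; it is the
intended element when `m = 0`). -/
noncomputable def oneD (k : Type) [Field k] (Q : Quiv) (R : Set (Q.A × Q.A)) (m : ℕ) :
    Coch k Q R m :=
  ∑ i : Q.V, bv k Q R m ((i, []), (i, []))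

/-- `⟨α⟩ = Σ_{i=0}^{r-1} (s(rot^i α), rot^i α)`, `r` the period of `α`. -/
noncomputable def cycB (k : Type) [Field k] (Q : Quiv) (R : Set (Q.A × Q.A)) (m : ℕ)
    (α : PathDat Q) : Coch k Q R m :=
  ∑ i ∈ Finset.range (periodP Q α),
    bv k Q R m ((psrc Q (rotI Q i α), []), rotI Q i α)

/-- `⟨C⟩ = Σ_{i=0}^{r-1} (-1)^{i m} (rot^i C, s(rot^i C))`, `r` the period of `C`. -/
noncomputable def cycG (k : Type) [Field k] (Q : Quiv) (R : Set (Q.A × Q.A)) (m : ℕ)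
    (C : PathDat Q) : Coch k Q R m :=
  ∑ i ∈ Finset.range (periodP Q C),
    ((-1 : k) ^ (i * m)) • bv k Q R m (rotI Q i C, (psrc Q (rotI Q i C), []))

/-- The coboundary subspace in degree `m` (zero in degree `0`). -/
noncomputable def cobSp (k : Type) [Field k] (Q : Quiv) (R : Set (Q.A × Q.A)) :
    (m : ℕ) → Submodule k (Coch k Q R m)
  | 0 => ⊥
  | m + 1 => LinearMap.range (dLin k Q R m)

/-- The cocycle subspace in degree `m`. -/
noncomputable def cocSp (k : Type) [Field k] (Q : Quiv) (R : Set (Q.A × Q.A)) (m : ℕ) :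
    Submodule k (Coch k Q R m) :=
  LinearMap.ker (dLin k Q R m)

/-- The degree-`m` cohomology `HH^m` of the complex `k(Γ ∥ B)` vanishes:
every cocycle is a coboundary. -/
def CohomIsZero (k : Type) [Field k] (Q : Quiv) (R : Set (Q.A × Q.A)) (m : ℕ) : Prop :=
  cocSp k Q R m ≤ cobSp k Q R m

/-- The degree-`m` cohomology `HH^m` of the complex `k(Γ ∥ B)` is
finite-dimensional: there is a finite set of cocycles whose classes span it. -/
def CohomFinDim (k : Type) [Field k] (Q : Quiv) (R : Set (Q.A × Q.A)) (m : ℕ) : Prop :=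
  ∃ G : Finset (Coch k Q R m), ↑G ⊆ (cocSp k Q R m : Set (Coch k Q R m)) ∧
    cocSp k Q R m ≤ cobSp k Q R m ⊔ Submodule.span k ↑G

/-- The degree-`m` cohomology `HH^m` of the complex `k(Γ ∥ B)` has dimension at
most `n`: there are `n` cocycles whose classes span it. -/
def CohomDimLe (k : Type) [Field k] (Q : Quiv) (R : Set (Q.A × Q.A)) (m n : ℕ) : Prop :=
  ∃ G : Finset (Coch k Q R m), G.card ≤ n ∧
    ↑G ⊆ (cocSp k Q R m : Set (Coch k Q R m)) ∧
    cocSp k Q R m ≤ cobSp k Q R m ⊔ Submodule.span k ↑G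

/-- `Gen` is a basis of the kernel of `d⁰`, i.e. it freely generates `HH⁰`. -/
def FreelyGeneratesKer0 (k : Type) [Field k] (Q : Quiv) (R : Set (Q.A × Q.A))
    (Gen : Set (Coch k Q R 0)) : Prop :=
  (∀ x ∈ Gen, dLin k Q R 0 x = 0) ∧
  (∀ z : Coch k Q R 0, dLin k Q R 0 z = 0 → z ∈ Submodule.span k Gen) ∧
  LinearIndependent k (fun x : Gen => (x : Coch k Q R 0))

/-- The cohomology classes of the elements of `Gen` freely generate the
degree-`(m+1)` cohomology of `k(Γ ∥ B)`: all elements of `Gen` are cocycles,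
every cocycle is congruent to an element of their span modulo coboundaries, no
nonzero element of their span is a coboundary, and `Gen` is linearly
independent. -/
def FreelyGeneratesCohom (k : Type) [Field k] (Q : Quiv) (R : Set (Q.A × Q.A)) (m : ℕ)
    (Gen : Set (Coch k Q R (m + 1))) : Prop :=
  (∀ x ∈ Gen, dLin k Q R (m + 1) x = 0) ∧
  (∀ z : Coch k Q R (m + 1), dLin k Q R (m + 1) z = 0 →
      ∃ y : Coch k Q R m, z - dLin k Q R m y ∈ Submodule.span k Gen) ∧
  (∀ x ∈ Submodule.span k Gen, x ∈ LinearMap.range (dLin k Q R m) → x = 0) ∧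
  LinearIndependent k (fun x : Gen => (x : Coch k Q R (m + 1)))

/-! ### The chain complex `k(B ⊙ Γ)` -/

/-- Membership in the degree-`m` basis `B ⊙ Γ_m` of the chain complex. -/
def BGmem (Q : Quiv) (R : Set (Q.A × Q.A)) (m : ℕ) (x : PathDat Q × PathDat Q) : Prop :=
  InB Q R x.1 ∧ InG Q R x.2 ∧ plen Q x.2 = m ∧ AntiPar Q x.1 x.2

abbrev BGt (Q : Quiv) (R : Set (Q.A × Q.A)) (m : ℕ) :=
  {x : PathDat Q × PathDat Q // BGmem Q R m x}

/-- The degree-`m` component of the chain complex `k(B ⊙ Γ)`. -/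
abbrev Chn (k : Type) [Field k] (Q : Quiv) (R : Set (Q.A × Q.A)) (m : ℕ) :=
  BGt Q R m →₀ k

/-- The basis vector of `k(B ⊙ Γ_m)` attached to a raw pair of path data
(and `0` if the pair is not in `B ⊙ Γ_m`). -/
noncomputable def bw (k : Type) [Field k] (Q : Quiv) (R : Set (Q.A × Q.A)) (m : ℕ)
    (x : PathDat Q × PathDat Q) : Chn k Q R m := by
  classical
  exact if h : BGmem Q R m x then Finsupp.single (⟨x, h⟩ : BGt Q R m) (1 : k) else 0

/-- `l1(p)`: the last arrow of `p` (as a path of length one). -/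
def l1P (Q : Quiv) (p : PathDat Q) : PathDat Q :=
  match p.2.getLast? with
  | none => p
  | some a => (Q.src a, [a])

/-- `l2(p)`: `p` with its last arrow removed. -/
def l2P (Q : Quiv) (p : PathDat Q) : PathDat Q := (p.1, p.2.dropLast)

/-- `r1(p)`: `p` with its first arrow removed. -/
def r1P (Q : Quiv) (p : PathDat Q) : PathDat Q :=
  match p.2 with
  | [] => p
  | a :: l => (Q.tgt a, l)

/-- `r2(p)`: the first arrow of `p` (as a path of length one). -/
def r2P (Q : Quiv) (p : PathDat Q) : PathDat Q :=
  match p.2 with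
  | [] => p
  | a :: _ => (Q.src a, [a])

/-- The raw first term `(α·l1(γ), l2(γ))` of the boundary of `(α, γ)`. -/
def d1raw (Q : Quiv) (x : PathDat Q × PathDat Q) : PathDat Q × PathDat Q :=
  match x.2.2.getLast? with
  | none => x
  | some a => ((Q.src a, a :: x.1.2), (x.2.1, x.2.2.dropLast))

/-- The raw second term `(r2(γ)·α, r1(γ))` of the boundary of `(α, γ)`. -/
def d2raw (Q : Quiv) (x : PathDat Q × PathDat Q) : PathDat Q × PathDat Q :=
  match x.2.2 with
  | [] => x
  | c :: l => ((x.1.1, x.1.2 ++ [c]), (Q.tgt c, l))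

/-- The boundary of a basis element:
`d_m (α, γ) = (α·l1(γ), l2(γ)) + (-1)^m (r2(γ)·α, r1(γ))` (in degree `m = m+1`),
where pairs whose first component is not in `B` are interpreted as `0`. -/
noncomputable def bdB (k : Type) [Field k] (Q : Quiv) (R : Set (Q.A × Q.A)) (m : ℕ)
    (x : BGt Q R (m + 1)) : Chn k Q R m :=
  bw k Q R m (d1raw Q x.val) + ((-1 : k) ^ (m + 1)) • bw k Q R m (d2raw Q x.val)

/-- The boundary map `d_{m+1} : k(B ⊙ Γ_{m+1}) → k(B ⊙ Γ_m)`. -/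
noncomputable def bd (k : Type) [Field k] (Q : Quiv) (R : Set (Q.A × Q.A)) (m : ℕ) :
    Chn k Q R (m + 1) →ₗ[k] Chn k Q R m :=
  Finsupp.linearCombination k (bdB k Q R m)

/-- The subspace of cycles in degree `m` (everything in degree `0`). -/
noncomputable def ZSp (k : Type) [Field k] (Q : Quiv) (R : Set (Q.A × Q.A)) :
    (m : ℕ) → Submodule k (Chn k Q R m)
  | 0 => ⊤
  | m + 1 => LinearMap.ker (bd k Q R m)

/-- The subspace of boundaries in degree `m`. -/
noncomputable def BSp (k : Type) [Field k] (Q : Quiv) (R : Set (Q.A × Q.A)) (m : ℕ) :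
    Submodule k (Chn k Q R m) :=
  LinearMap.range (bd k Q R m)

/-- The degree-`m` homology `HH_m` of the complex `k(B ⊙ Γ)` vanishes:
every cycle is a boundary. -/
def HomIsZero (k : Type) [Field k] (Q : Quiv) (R : Set (Q.A × Q.A)) (m : ℕ) : Prop :=
  ZSp k Q R m ≤ BSp k Q R m

/-- The degree-`m` homology `HH_m` of the complex `k(B ⊙ Γ)` is
finite-dimensional: there is a finite set of cycles whose classes span it. -/
def HomFinDim (k : Type) [Field k] (Q : Quiv) (R : Set (Q.A × Q.A)) (m : ℕ) : Prop :=
  ∃ G : Finset (Chn k Q R m), ↑G ⊆ (ZSp k Q R m : Set (Chn k Q R m)) ∧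
    ZSp k Q R m ≤ BSp k Q R m ⊔ Submodule.span k ↑G

/-- The concatenation `α γ` of an antiparallel pair (a cycle, or a trivial path). -/
def concatP (Q : Quiv) (x : PathDat Q × PathDat Q) : PathDat Q := (x.2.1, x.2.2 ++ x.1.2)

/-- The degree-`m` component of the subcomplex `k(B ⊙ Γ)_C`, spanned by the
basis elements whose concatenation lies in the circuit (rotation class) of `c`. -/
noncomputable def Wsp (k : Type) [Field k] (Q : Quiv) (R : Set (Q.A × Q.A))
    (c : PathDat Q) (m : ℕ) : Submodule k (Chn k Q R m) :=
  Submodule.span k {z : Chn k Q R m |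
    ∃ x : BGt Q R m, RotEquiv Q (concatP Q x.val) c ∧ z = Finsupp.single x (1 : k)}

/-- The boundaries of the subcomplex `k(B ⊙ Γ)_C` in degree `m`. -/
noncomputable def WB (k : Type) [Field k] (Q : Quiv) (R : Set (Q.A × Q.A))
    (c : PathDat Q) (m : ℕ) : Submodule k (Chn k Q R m) :=
  Submodule.map (bd k Q R m) (Wsp k Q R c (m + 1))

/-- The cycles of the subcomplex `k(B ⊙ Γ)_C` in degree `m`. -/
noncomputable def WZ (k : Type) [Field k] (Q : Quiv) (R : Set (Q.A × Q.A))
    (c : PathDat Q) (m : ℕ) : Submodule k (Chn k Q R m) :=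
  ZSp k Q R m ⊓ Wsp k Q R c m

/-- The degree-`m` homology of `k(B ⊙ Γ)_C` is one-dimensional, spanned by the
homology class of `v`. -/
def SubHomSpannedBy (k : Type) [Field k] (Q : Quiv) (R : Set (Q.A × Q.A))
    (c : PathDat Q) (m : ℕ) (v : Chn k Q R m) : Prop :=
  v ∈ WZ k Q R c m ∧ v ∉ WB k Q R c m ∧
  ∀ z ∈ WZ k Q R c m, ∃ t : k, z - t • v ∈ WB k Q R c m

/-- `ĥ(c) = Σ_{i=0}^{r-1} (r1(rot^i c), r2(rot^i c))` (degree 1, for cocomplete cycles;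
placed in degree `m`). -/
noncomputable def hCycR (k : Type) [Field k] (Q : Quiv) (R : Set (Q.A × Q.A)) (m : ℕ)
    (c : PathDat Q) : Chn k Q R m :=
  ∑ i ∈ Finset.range (periodP Q c),
    bw k Q R m (r1P Q (rotI Q i c), r2P Q (rotI Q i c))

/-- `ĥ(c) = Σ_{i=0}^{r-1} (-1)^{(m+1) i} (s(rot^i c), rot^i c)` (degree `m`, for
complete cycles of length `m`). -/
noncomputable def hCycM (k : Type) [Field k] (Q : Quiv) (R : Set (Q.A × Q.A)) (m : ℕ)
    (c : PathDat Q) : Chn k Q R m :=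
  ∑ i ∈ Finset.range (periodP Q c),
    ((-1 : k) ^ ((m + 1) * i)) • bw k Q R m ((psrc Q (rotI Q i c), []), rotI Q i c)

/-- The homology classes of the elements of `Gen` freely generate the degree-`m`
homology of `k(B ⊙ Γ)`. -/
def FreelyGeneratesHom (k : Type) [Field k] (Q : Quiv) (R : Set (Q.A × Q.A)) (m : ℕ)
    (Gen : Set (Chn k Q R m)) : Prop :=
  (∀ x ∈ Gen, x ∈ ZSp k Q R m) ∧
  (∀ z ∈ ZSp k Q R m, ∃ y : Chn k Q R (m + 1), z - bd k Q R m y ∈ Submodule.span k Gen) ∧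
  (∀ x ∈ Submodule.span k Gen, x ∈ LinearMap.range (bd k Q R m) → x = 0) ∧
  LinearIndependent k (fun x : Gen => (x : Chn k Q R m))

/-!
Write `ρᵢ = rotⁱ c` and `r` for the period of `c`. Since `c² ∈ B`, every `ρᵢ` is again
cocomplete. The concatenation of a basis pair of `k(B ⊙ Γ)_C` is some `ρᵢ`, hence lies in `B`;
this rules out `γ ∈ Γ` of length `≥ 2`, and leaves exactly the pairs `(ρᵢ, s(ρᵢ))` in degree 0
and `(r1 ρᵢ, r2 ρᵢ)` in degree 1, `i < r`. The differential sends `(r1 ρᵢ₊₁, r2 ρᵢ₊₁)` to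
`(ρᵢ₊₁, s(ρᵢ₊₁)) - (ρᵢ, s(ρᵢ))`, so `k(B ⊙ Γ)_C` is the cellular chain complex of a circle with
`r` vertices and `r` edges. Hence `H₀` is detected by the augmentation (the sum of coefficients),
and a 1-cycle has equal coefficients on consecutive edges, so it is a multiple of `ĥ(c)`, the sum
of all edges.
-/

theorem _root_.List.isChain_append_self_iff {α : Type*} {S : α → α → Prop} {l : List α}
    (hl : l ≠ []) : (l ++ l).IsChain S ↔ Cycle.Chain S (l : Cycle α) := by
  obtain ⟨a, m, rfl⟩ := List.exists_cons_of_ne_nil hl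
  rw [Cycle.chain_coe_cons]
  refine ⟨fun h => h.prefix ⟨m, by simp⟩, fun h => ?_⟩
  have h' : (a :: m ++ [a]).IsChain S := by simpa using h
  simpa using h'.append_overlap (l₃ := m) (h.prefix ⟨[a], by simp⟩) (by simp)

theorem _root_.Function.Periodic.sum_range_add {M : Type*} [AddCommMonoid M] {g : ℕ → M}
    {r : ℕ} (hg : Function.Periodic g r) (j : ℕ) :
    ∑ i ∈ Finset.range r, g (i + j) = ∑ i ∈ Finset.range r, g i := by
  calc ∑ i ∈ Finset.range r, g (i + j) = ∑ i ∈ Finset.Ico j (j + r), g (i % r) := by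
        simp [Finset.sum_Ico_eq_sum_range, hg.map_mod_nat, add_comm]
    _ = ∑ i ∈ Finset.range r, g i := by
        rw [Finset.sum, Finset.sum, ← Function.comp_def g, ← Multiset.map_map, Finset.range_val,
          ← Nat.multiset_Ico_map_mod j r]
        rfl

section Rotation

variable {Q : Quiv}

def IsAnchored (Q : Quiv) (p : PathDat Q) : Prop := ∀ a ∈ p.2.head?, Q.src a = p.1

theorem IsCycle.isAnchored {p : PathDat Q} (hp : IsCycle Q p) : IsAnchored Q p := hp.1.2

theorem IsAnchored.ext {p q : PathDat Q} (hp : IsAnchored Q p) (hq : IsAnchored Q q)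
    (h : p.2 = q.2) (hne : p.2 ≠ []) : p = q := by
  obtain ⟨a, l, hal⟩ := List.exists_cons_of_ne_nil hne
  exact Prod.ext ((hp a (by simp [hal])).symm.trans (hq a (by simp [← h, hal]))) h

theorem rotP_concat (v : Q.V) (l : List Q.A) (a : Q.A) :
    rotP Q (v, l ++ [a]) = (Q.src a, a :: l) := by
  simp [rotP]

theorem isAnchored_rotP (p : PathDat Q) : IsAnchored Q (rotP Q p) := by
  obtain ⟨v, l⟩ := p
  rcases l.eq_nil_or_concat' with rfl | ⟨l, a, rfl⟩
  · simp [IsAnchored, rotP]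
  · simp [IsAnchored, rotP_concat]

theorem rotP_snd (p : PathDat Q) : (rotP Q p).2 = p.2.rotate (p.2.length - 1) := by
  obtain ⟨v, l⟩ := p
  rcases l.eq_nil_or_concat' with rfl | ⟨l, a, rfl⟩
  · rfl
  · simp [rotP_concat, List.rotate_append_length_eq]

@[simp]
theorem rotI_zero (p : PathDat Q) : rotI Q 0 p = p := rfl

theorem rotI_succ (i : ℕ) (p : PathDat Q) : rotI Q (i + 1) p = rotP Q (rotI Q i p) :=
  Function.iterate_succ_apply' _ _ _

theorem rotI_add (i j : ℕ) (p : PathDat Q) : rotI Q (i + j) p = rotI Q i (rotI Q j p) :=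
  Function.iterate_add_apply _ _ _ _

theorem rotI_snd (i : ℕ) (p : PathDat Q) :
    (rotI Q i p).2 = p.2.rotate ((p.2.length - 1) * i) := by
  induction i with
  | zero => simp
  | succ i ih =>
    rw [rotI_succ, rotP_snd, ih, List.length_rotate, List.rotate_rotate, Nat.mul_succ]

theorem isPeriodicPt_length {p : PathDat Q} (hp : IsAnchored Q p) :
    Function.IsPeriodicPt (rotP Q) p.2.length p := by
  rcases eq_or_ne p.2 [] with hnil | hne
  · rw [hnil]
    exact Function.isPeriodicPt_zero _ _
  obtain ⟨n, hn⟩ : ∃ n, p.2.length = n + 1 := Nat.exists_eq_succ_of_ne_zero (by simpa using hne)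
  show rotI Q p.2.length p = p
  refine IsAnchored.ext ?_ hp ?_ ?_
  · rw [hn, rotI_succ]
    exact isAnchored_rotP _
  · rw [rotI_snd, mul_comm, List.rotate_length_mul]
  · simpa [rotI_snd] using hne

theorem mem_periodicPts_rotP {p : PathDat Q} (hp : IsAnchored Q p) (hne : p.2 ≠ []) :
    p ∈ Function.periodicPts (rotP Q) :=
  Function.mk_mem_periodicPts (List.length_pos_of_ne_nil hne) (isPeriodicPt_length hp)

theorem rotEquiv_rotI {p : PathDat Q} (hp : IsAnchored Q p) (hne : p.2 ≠ []) (j : ℕ) :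
    RotEquiv Q (rotI Q j p) p := by
  obtain ⟨n, hn⟩ : ∃ n, p.2.length = n + 1 := Nat.exists_eq_succ_of_ne_zero (by simpa using hne)
  refine ⟨n * j, ?_⟩
  rw [← rotI_add, show n * j + j = (n + 1) * j by ring]
  exact (hn ▸ isPeriodicPt_length hp).mul_const j

theorem exists_eq_rotP_rotI {p c : PathDat Q} (hc : c.2 ≠ []) (hp : IsAnchored Q p)
    (h : RotEquiv Q p c) : ∃ j, p = rotP Q (rotI Q j c) := by
  obtain ⟨i, rfl⟩ := h
  obtain ⟨n, hn⟩ : ∃ n, p.2.length = n + 1 :=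
    Nat.exists_eq_succ_of_ne_zero (by simpa [rotI_snd] using hc)
  -- `rot^|p|` fixes `p`, so `p = rot^(|p| (i + 1)) p = rot^(n (i + 1) + 1) c`.
  refine ⟨n * (i + 1), ?_⟩
  rw [← rotI_succ, ← rotI_add, show n * (i + 1) + 1 + i = (n + 1) * (i + 1) by ring]
  exact ((hn ▸ isPeriodicPt_length hp).mul_const (i + 1)).eq.symm

theorem periodP_eq_minimalPeriod (p : PathDat Q) :
    periodP Q p = Function.minimalPeriod (rotP Q) p := by
  rw [Function.minimalPeriod_eq_sInf_n_pos_IsPeriodicPt, periodP]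
  rfl

theorem periodP_pos {p : PathDat Q} (hp : IsAnchored Q p) (hne : p.2 ≠ []) : 0 < periodP Q p := by
  rw [periodP_eq_minimalPeriod]
  exact Function.minimalPeriod_pos_of_mem_periodicPts (mem_periodicPts_rotP hp hne)

theorem periodP_rotI {p : PathDat Q} (hp : IsAnchored Q p) (hne : p.2 ≠ []) (j : ℕ) :
    periodP Q (rotI Q j p) = periodP Q p := by
  rw [periodP_eq_minimalPeriod, periodP_eq_minimalPeriod]
  exact Function.minimalPeriod_apply_iterate (mem_periodicPts_rotP hp hne) j

theorem rotI_add_periodP (i : ℕ) (p : PathDat Q) : rotI Q (i + periodP Q p) p = rotI Q i p := by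
  rw [periodP_eq_minimalPeriod]
  exact Function.iterate_add_minimalPeriod_eq

theorem rotI_periodP (p : PathDat Q) : rotI Q (periodP Q p) p = p := by
  rw [periodP_eq_minimalPeriod]
  exact Function.iterate_minimalPeriod

theorem rotI_mod_periodP (i : ℕ) (p : PathDat Q) : rotI Q (i % periodP Q p) p = rotI Q i p := by
  rw [periodP_eq_minimalPeriod]
  exact Function.iterate_mod_minimalPeriod_eq

theorem rotI_inj {p : PathDat Q} {i j : ℕ} (hi : i < periodP Q p) (hj : j < periodP Q p) :
    rotI Q i p = rotI Q j p ↔ i = j := by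
  rw [periodP_eq_minimalPeriod] at hi hj
  exact ⟨fun h => Function.iterate_injOn_Iio_minimalPeriod hi hj h, fun h => h ▸ rfl⟩

theorem rotP_inj {p q : PathDat Q} (hp : IsCycle Q p) (hq : IsCycle Q q) :
    rotP Q p = rotP Q q ↔ p = q := by
  refine ⟨fun h => ?_, fun h => h ▸ rfl⟩
  have hlen : p.2.length = q.2.length := by
    simpa [rotP_snd] using congrArg (fun x => x.2.length) h
  have hl : p.2 = q.2 := by
    have h2 := congrArg Prod.snd h
    rwa [rotP_snd, rotP_snd, hlen, List.rotate_eq_rotate] at h2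
  refine Prod.ext ?_ hl
  obtain ⟨a, l, hal⟩ := List.exists_cons_of_ne_nil hp.2.1
  have hpt := hp.2.2
  have hqt := hq.2.2
  simp only [psrc, ptgt, ← hl, hal, List.getLast?_cons] at hpt hqt
  exact hpt.trans hqt.symm

end Rotation

section Cocomplete

variable {Q : Quiv} {R : Set (Q.A × Q.A)}

theorem cocomplete_iff {p : PathDat Q} :
    Cocomplete Q R p ↔ p.2 ≠ [] ∧ IsAnchored Q p ∧
      Cycle.Chain (fun a b => Q.tgt a = Q.src b) (p.2 : Cycle Q.A) ∧
      Cycle.Chain (fun a b => (a, b) ∉ R) (p.2 : Cycle Q.A) := by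
  obtain ⟨v, l⟩ := p
  simp only [Cocomplete, IsCycle, InB, Ok, powP, powL, List.append_nil]
  refine ⟨fun ⟨⟨⟨_, hanch⟩, hne, _⟩, ⟨hcmp, _⟩, hR⟩ => ?_, fun ⟨hne, hanch, hcmp, hR⟩ => ?_⟩
  · exact ⟨hne, hanch, (List.isChain_append_self_iff hne).mp hcmp,
      (List.isChain_append_self_iff hne).mp hR⟩
  rw [← List.isChain_append_self_iff hne] at hcmp hR
  obtain ⟨a, m, rfl⟩ := List.exists_cons_of_ne_nil hne
  refine ⟨⟨⟨hcmp.prefix (List.prefix_append _ _), hanch⟩, hne, ?_⟩,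
    ⟨hcmp, by simpa using hanch a rfl⟩, hR⟩
  have hwrap := hcmp.rel_getLast_head_of_append hne hne
  simp only [psrc, ptgt, List.getLast?_eq_some_getLast hne, Option.elim_some]
  exact (hanch a rfl).symm.trans hwrap.symm

theorem Cocomplete.rotate {p : PathDat Q} (hp : Cocomplete Q R p) :
    Cocomplete Q R (rotP Q p) := by
  obtain ⟨v, l⟩ := p
  rw [cocomplete_iff] at hp ⊢
  obtain ⟨hne, -, hcmp, hR⟩ := hp
  obtain ⟨l, a, rfl⟩ := l.eq_nil_or_concat'.resolve_left hne
  rw [rotP_concat]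
  rw [← Cycle.coe_cons_eq_coe_append] at hcmp hR
  exact ⟨List.cons_ne_nil _ _, by simp [IsAnchored], hcmp, hR⟩

theorem Cocomplete.rotate_iterate {p : PathDat Q} (hp : Cocomplete Q R p) (j : ℕ) :
    Cocomplete Q R (rotI Q j p) := by
  induction j with
  | zero => exact hp
  | succ j ih => exact rotI_succ j p ▸ ih.rotate

theorem Cocomplete.inB {p : PathDat Q} (hp : Cocomplete Q R p) : InB Q R p := by
  have hR := (List.isChain_append_self_iff hp.1.2.1).mpr (cocomplete_iff.mp hp).2.2.2
  exact ⟨hp.1.1, hR.prefix (List.prefix_append _ _)⟩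

end Cocomplete


section BasisPairs

variable {Q : Quiv} {R : Set (Q.A × Q.A)}

theorem isAnchored_concatP {m : ℕ} {x : PathDat Q × PathDat Q} (hx : BGmem Q R m x) :
    IsAnchored Q (concatP Q x) := by
  obtain ⟨⟨u, l⟩, ⟨v, g⟩⟩ := x
  obtain ⟨⟨⟨-, hα⟩, -⟩, ⟨⟨-, hγ⟩, -⟩, -, hαγ, -⟩ := hx
  intro a ha
  cases g with
  | nil => exact (hα a ha).trans hαγ
  | cons b g =>
    obtain rfl : b = a := by simpa [concatP] using ha
    exact hγ b rfl

theorem eq_of_bgmem_zero {x : PathDat Q × PathDat Q} (hx : BGmem Q R 0 x) :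
    x = (concatP Q x, ((concatP Q x).1, [])) := by
  obtain ⟨⟨u, l⟩, ⟨v, g⟩⟩ := x
  obtain ⟨-, -, hlen, hαγ, -⟩ := hx
  obtain rfl : g = [] := List.length_eq_zero_iff.mp hlen
  obtain rfl : u = v := hαγ
  rfl

theorem eq_of_bgmem_one {x : PathDat Q × PathDat Q} (hx : BGmem Q R 1 x) :
    x = (r1P Q (concatP Q x), r2P Q (concatP Q x)) := by
  obtain ⟨⟨u, l⟩, ⟨v, g⟩⟩ := x
  obtain ⟨-, ⟨⟨-, hγ⟩, -⟩, hlen, hαγ, -⟩ := hx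
  obtain ⟨b, rfl⟩ := List.length_eq_one_iff.mp hlen
  obtain rfl : Q.src b = v := hγ b rfl
  obtain rfl : u = Q.tgt b := hαγ
  rfl

theorem not_inB_concatP {m : ℕ} {x : PathDat Q × PathDat Q} (hx : BGmem Q R m x) (hm : 2 ≤ m) :
    ¬ InB Q R (concatP Q x) := by
  obtain ⟨⟨u, l⟩, ⟨v, g⟩⟩ := x
  obtain ⟨-, ⟨-, hγR⟩, hlen, -⟩ := hx
  rcases g with _ | ⟨a, _ | ⟨b, g⟩⟩ <;> simp only [plen, List.length_nil, List.length_cons] at hlen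
  · omega
  · omega
  rintro ⟨-, hB⟩
  exact (List.isChain_cons_cons.mp hB).1 (List.isChain_cons_cons.mp hγR).1

theorem bgmem_vtxPair {p : PathDat Q} (hp : IsCycle Q p) (hB : InB Q R p) :
    BGmem Q R 0 (p, (p.1, [])) :=
  ⟨hB, ⟨⟨List.isChain_nil, by simp⟩, List.isChain_nil⟩, rfl, rfl, hp.2.2.symm⟩

theorem bgmem_edgePair {p : PathDat Q} (hp : IsCycle Q p) (hB : InB Q R p) :
    BGmem Q R 1 (r1P Q p, r2P Q p) := by
  obtain ⟨v, l⟩ := p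
  obtain ⟨⟨hcmp, hanch⟩, hne, hcyc⟩ := hp
  obtain ⟨b, l, rfl⟩ := List.exists_cons_of_ne_nil hne
  have hlast : ptgt Q (Q.tgt b, l) = ptgt Q (v, b :: l) := by
    cases l <;> simp [ptgt, List.getLast?_cons]
  refine ⟨⟨⟨hcmp.tail, fun a ha => ((List.isChain_cons.mp hcmp).1 a ha).symm⟩, hB.2.tail⟩,
    ⟨⟨List.isChain_singleton b, by simp [r2P]⟩, List.isChain_singleton b⟩, rfl, rfl, ?_⟩
  exact hlast.trans (hcyc.symm.trans (hanch b rfl).symm)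

theorem concatP_edgePair {p : PathDat Q} (hp : IsAnchored Q p) (hne : p.2 ≠ []) :
    concatP Q (r1P Q p, r2P Q p) = p := by
  obtain ⟨v, l⟩ := p
  obtain ⟨b, l, rfl⟩ := List.exists_cons_of_ne_nil hne
  obtain rfl : Q.src b = v := hp b rfl
  rfl

theorem d1raw_edgePair {p : PathDat Q} (hp : IsAnchored Q p) (hne : p.2 ≠ []) :
    d1raw Q (r1P Q p, r2P Q p) = (p, (p.1, [])) := by
  obtain ⟨v, l⟩ := p
  obtain ⟨b, l, rfl⟩ := List.exists_cons_of_ne_nil hne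
  obtain rfl : Q.src b = v := hp b rfl
  rfl

theorem d2raw_edgePair_rotP {q : PathDat Q} (hq : psrc Q q = ptgt Q q) (hne : q.2 ≠ []) :
    d2raw Q (r1P Q (rotP Q q), r2P Q (rotP Q q)) = (q, (q.1, [])) := by
  obtain ⟨v, l⟩ := q
  obtain ⟨l, a, rfl⟩ := l.eq_nil_or_concat'.resolve_left hne
  obtain rfl : v = Q.tgt a := by simpa [psrc, ptgt] using hq
  rw [rotP_concat]
  rfl

end BasisPairs

/-- `vtx p` and `edge p` are the paper's `(p, s(p))` and `(r1(p), r2(p))`. -/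
noncomputable def vtx (k : Type) [Field k] (Q : Quiv) (R : Set (Q.A × Q.A)) (p : PathDat Q) :
    Chn k Q R 0 :=
  bw k Q R 0 (p, (p.1, []))

noncomputable def edge (k : Type) [Field k] (Q : Quiv) (R : Set (Q.A × Q.A)) (p : PathDat Q) :
    Chn k Q R 1 :=
  bw k Q R 1 (r1P Q p, r2P Q p)

noncomputable def augmentation (k : Type) [Field k] (Q : Quiv) (R : Set (Q.A × Q.A)) :
    Chn k Q R 0 →ₗ[k] k :=
  Finsupp.linearCombination k fun _ => 1

section Chains

variable (k : Type) [Field k] {Q : Quiv} {R : Set (Q.A × Q.A)}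

def vtxGen {p : PathDat Q} (hp : Cocomplete Q R p) : BGt Q R 0 :=
  ⟨(p, (p.1, [])), bgmem_vtxPair hp.1 hp.inB⟩

def edgeGen {p : PathDat Q} (hp : Cocomplete Q R p) : BGt Q R 1 :=
  ⟨(r1P Q p, r2P Q p), bgmem_edgePair hp.1 hp.inB⟩

theorem bw_of_bgmem {m : ℕ} {x : PathDat Q × PathDat Q} (h : BGmem Q R m x) :
    bw k Q R m x = Finsupp.single ⟨x, h⟩ 1 :=
  dif_pos h

theorem bw_apply {m : ℕ} {x : PathDat Q × PathDat Q} (h : BGmem Q R m x) (y : BGt Q R m) :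
    bw k Q R m x y = if x = y.1 then 1 else 0 := by
  rw [bw_of_bgmem k h, Finsupp.single_apply]
  exact if_congr Subtype.ext_iff rfl rfl

theorem vtx_apply {p q : PathDat Q} (hp : Cocomplete Q R p) (hq : Cocomplete Q R q) :
    vtx k Q R p (vtxGen hq) = if p = q then 1 else 0 :=
  (bw_apply k (bgmem_vtxPair hp.1 hp.inB) _).trans
    (if_congr ⟨congrArg Prod.fst, fun h => h ▸ rfl⟩ rfl rfl)

theorem edge_apply {p q : PathDat Q} (hp : Cocomplete Q R p) (hq : Cocomplete Q R q) :
    edge k Q R p (edgeGen hq) = if p = q then 1 else 0 := by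
  refine (bw_apply k (bgmem_edgePair hp.1 hp.inB) _).trans
    (if_congr ⟨fun h => ?_, fun h => h ▸ rfl⟩ rfl rfl)
  rw [← concatP_edgePair hp.1.isAnchored hp.1.2.1, ← concatP_edgePair hq.1.isAnchored hq.1.2.1]
  exact congrArg (concatP Q) h

theorem bd_edge_rotP {q : PathDat Q} (hq : Cocomplete Q R q) :
    bd k Q R 0 (edge k Q R (rotP Q q)) = vtx k Q R (rotP Q q) - vtx k Q R q := by
  have hr := hq.rotate
  rw [edge, bw_of_bgmem k (bgmem_edgePair hr.1 hr.inB), bd, Finsupp.linearCombination_single,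
    one_smul, bdB]
  dsimp only
  rw [d1raw_edgePair (isAnchored_rotP q) hr.1.2.1, d2raw_edgePair_rotP hq.1.2.2 hq.1.2.1,
    zero_add, pow_one, neg_one_smul, ← sub_eq_add_neg]
  rfl

theorem augmentation_vtx {p : PathDat Q} (hp : Cocomplete Q R p) :
    augmentation k Q R (vtx k Q R p) = 1 := by
  rw [vtx, bw_of_bgmem k (bgmem_vtxPair hp.1 hp.inB), augmentation,
    Finsupp.linearCombination_single, smul_eq_mul, mul_one]

theorem hCycR_eq_sum_edge (p : PathDat Q) :
    hCycR k Q R 1 p = ∑ i ∈ Finset.range (periodP Q p), edge k Q R (rotI Q i p) :=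
  rfl

theorem edge_rotI_periodic (p : PathDat Q) :
    Function.Periodic (fun i => edge k Q R (rotI Q i p)) (periodP Q p) := fun i => by
  simp only [rotI_add_periodP]

end Chains

section Circuit

variable (k : Type) [Field k] {Q : Quiv} {R : Set (Q.A × Q.A)} {c : PathDat Q}

theorem exists_single_eq_vtx (hc : Cocomplete Q R c) {x : BGt Q R 0}
    (h : RotEquiv Q (concatP Q x.1) c) :
    ∃ j, Finsupp.single x 1 = vtx k Q R (rotP Q (rotI Q j c)) := by
  obtain ⟨j, hj⟩ := exists_eq_rotP_rotI hc.1.2.1 (isAnchored_concatP x.2) h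
  refine ⟨j, ?_⟩
  rw [vtx, ← hj, ← eq_of_bgmem_zero x.2, bw_of_bgmem k x.2]

theorem exists_single_eq_edge (hc : Cocomplete Q R c) {x : BGt Q R 1}
    (h : RotEquiv Q (concatP Q x.1) c) :
    ∃ j, Finsupp.single x 1 = edge k Q R (rotP Q (rotI Q j c)) := by
  obtain ⟨j, hj⟩ := exists_eq_rotP_rotI hc.1.2.1 (isAnchored_concatP x.2) h
  refine ⟨j, ?_⟩
  rw [edge, ← hj, ← eq_of_bgmem_one x.2, bw_of_bgmem k x.2]

theorem Wsp_eq_bot (hc : Cocomplete Q R c) {m : ℕ} (hm : 2 ≤ m) : Wsp k Q R c m = ⊥ := by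
  rw [Wsp, Submodule.span_eq_bot]
  rintro _ ⟨x, h, rfl⟩
  obtain ⟨j, hj⟩ := exists_eq_rotP_rotI hc.1.2.1 (isAnchored_concatP x.2) h
  exact (not_inB_concatP x.2 hm (hj ▸ (hc.rotate_iterate j).rotate.inB)).elim

theorem vtx_mem_Wsp (hc : Cocomplete Q R c) (j : ℕ) :
    vtx k Q R (rotI Q j c) ∈ Wsp k Q R c 0 :=
  Submodule.subset_span ⟨vtxGen (hc.rotate_iterate j), rotEquiv_rotI hc.1.isAnchored hc.1.2.1 j,
    bw_of_bgmem k _⟩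

theorem edge_mem_Wsp (hc : Cocomplete Q R c) (j : ℕ) :
    edge k Q R (rotI Q j c) ∈ Wsp k Q R c 1 := by
  have hj := hc.rotate_iterate j
  refine Submodule.subset_span ⟨edgeGen hj, ?_, bw_of_bgmem k _⟩
  rw [edgeGen, concatP_edgePair hj.1.isAnchored hj.1.2.1]
  exact rotEquiv_rotI hc.1.isAnchored hc.1.2.1 j

theorem bd_edge_rotI_succ (hc : Cocomplete Q R c) (i : ℕ) :
    bd k Q R 0 (edge k Q R (rotI Q (i + 1) c)) =
      vtx k Q R (rotI Q (i + 1) c) - vtx k Q R (rotI Q i c) := by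
  rw [rotI_succ, bd_edge_rotP k (hc.rotate_iterate i)]

theorem vtx_rotI_sub_vtx_mem_WB (hc : Cocomplete Q R c) (j : ℕ) :
    vtx k Q R (rotI Q j c) - vtx k Q R c ∈ WB k Q R c 0 := by
  have h : vtx k Q R (rotI Q j c) - vtx k Q R c =
      bd k Q R 0 (∑ i ∈ Finset.range j, edge k Q R (rotI Q (i + 1) c)) := by
    simp only [map_sum, bd_edge_rotI_succ k hc,
      Finset.sum_range_sub (fun i => vtx k Q R (rotI Q i c)), rotI_zero]
  rw [h]
  exact Submodule.mem_map_of_mem (Submodule.sum_mem _ fun i _ => edge_mem_Wsp k hc (i + 1))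

theorem WB_zero_le_ker_augmentation (hc : Cocomplete Q R c) :
    WB k Q R c 0 ≤ LinearMap.ker (augmentation k Q R) := by
  suffices Wsp k Q R c 1 ≤ LinearMap.ker ((augmentation k Q R).comp (bd k Q R 0)) by
    rintro _ ⟨z, hz, rfl⟩
    exact this hz
  refine Submodule.span_le.mpr ?_
  rintro _ ⟨x, h, rfl⟩
  obtain ⟨j, hj⟩ := exists_single_eq_edge k hc h
  have hq := hc.rotate_iterate j
  simp only [SetLike.mem_coe, LinearMap.mem_ker, LinearMap.comp_apply, hj, bd_edge_rotP k hq,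
    map_sub, augmentation_vtx k hq, augmentation_vtx k hq.rotate, sub_self]

theorem vtx_notMem_WB (hc : Cocomplete Q R c) : vtx k Q R c ∉ WB k Q R c 0 := fun h =>
  one_ne_zero ((augmentation_vtx k hc).symm.trans (WB_zero_le_ker_augmentation k hc h))

theorem sub_augmentation_smul_vtx_mem_WB (hc : Cocomplete Q R c) {z : Chn k Q R 0}
    (hz : z ∈ Wsp k Q R c 0) : z - augmentation k Q R z • vtx k Q R c ∈ WB k Q R c 0 := by
  let L : Chn k Q R 0 →ₗ[k] Chn k Q R 0 :=
    LinearMap.id - (augmentation k Q R).smulRight (vtx k Q R c)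
  suffices Wsp k Q R c 0 ≤ (WB k Q R c 0).comap L from this hz
  refine Submodule.span_le.mpr ?_
  rintro _ ⟨x, h, rfl⟩
  obtain ⟨j, hj⟩ := exists_single_eq_vtx k hc h
  simp only [SetLike.mem_coe, Submodule.mem_comap, L, LinearMap.sub_apply, LinearMap.id_apply,
    LinearMap.smulRight_apply, hj, ← rotI_succ, augmentation_vtx k (hc.rotate_iterate (j + 1)),
    one_smul]
  exact vtx_rotI_sub_vtx_mem_WB k hc (j + 1)

theorem bd_hCycR (hc : Cocomplete Q R c) : bd k Q R 0 (hCycR k Q R 1 c) = 0 := by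
  calc bd k Q R 0 (hCycR k Q R 1 c)
      = ∑ i ∈ Finset.range (periodP Q c), bd k Q R 0 (edge k Q R (rotI Q (i + 1) c)) := by
        rw [hCycR_eq_sum_edge, ← (edge_rotI_periodic k c).sum_range_add 1, map_sum]
    _ = 0 := by
        simp only [bd_edge_rotI_succ k hc, Finset.sum_range_sub (fun i => vtx k Q R (rotI Q i c)),
          rotI_periodP, rotI_zero, sub_self]

theorem hCycR_mem_WZ (hc : Cocomplete Q R c) : hCycR k Q R 1 c ∈ WZ k Q R c 1 :=
  ⟨LinearMap.mem_ker.mpr (bd_hCycR k hc), Submodule.sum_mem _ fun i _ => edge_mem_Wsp k hc i⟩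

theorem hCycR_apply_edgeGen (hc : Cocomplete Q R c) : hCycR k Q R 1 c (edgeGen hc) = 1 := by
  have hr := periodP_pos hc.1.isAnchored hc.1.2.1
  rw [hCycR_eq_sum_edge, Finsupp.finsetSum_apply]
  calc ∑ i ∈ Finset.range (periodP Q c), edge k Q R (rotI Q i c) (edgeGen hc)
      = ∑ i ∈ Finset.range (periodP Q c), if i = 0 then (1 : k) else 0 :=
        Finset.sum_congr rfl fun i hi => (edge_apply k (hc.rotate_iterate i) hc).trans
          (if_congr (rotI_inj (Finset.mem_range.mp hi) hr) rfl rfl)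
    _ = 1 := by rw [Finset.sum_ite_eq', if_pos (Finset.mem_range.mpr hr)]

theorem hCycR_notMem_WB (hc : Cocomplete Q R c) : hCycR k Q R 1 c ∉ WB k Q R c 1 := by
  rw [WB, Wsp_eq_bot k hc le_rfl, Submodule.map_bot, Submodule.mem_bot]
  intro h
  simpa [h] using hCycR_apply_edgeGen k hc

theorem bd_apply_vtxGen (hc : Cocomplete Q R c) {z : Chn k Q R 1} (hz : z ∈ Wsp k Q R c 1)
    (i : ℕ) : bd k Q R 0 z (vtxGen (hc.rotate_iterate i)) =
      z (edgeGen (hc.rotate_iterate i)) - z (edgeGen (hc.rotate_iterate (i + 1))) := by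
  let L₁ := (Finsupp.lapply (vtxGen (hc.rotate_iterate i))).comp (bd k Q R 0)
  let L₂ : Chn k Q R 1 →ₗ[k] k := Finsupp.lapply (edgeGen (hc.rotate_iterate i)) -
    Finsupp.lapply (edgeGen (hc.rotate_iterate (i + 1)))
  refine LinearMap.eqOn_span (f := L₁) (g := L₂) ?_ hz
  rintro _ ⟨x, h, rfl⟩
  obtain ⟨j, hj⟩ := exists_single_eq_edge k hc h
  have hq := hc.rotate_iterate j
  simp only [L₁, L₂, LinearMap.comp_apply, LinearMap.sub_apply, Finsupp.lapply_apply, hj,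
    bd_edge_rotP k hq, Finsupp.sub_apply, vtx_apply k hq.rotate, vtx_apply k hq,
    edge_apply k hq.rotate, rotI_succ, rotP_inj hq.1 (hc.rotate_iterate i).1]

theorem eq_sum_edge_of_mem_Wsp (hc : Cocomplete Q R c) {z : Chn k Q R 1}
    (hz : z ∈ Wsp k Q R c 1) : z = ∑ i ∈ Finset.range (periodP Q c),
      z (edgeGen (hc.rotate_iterate i)) • edge k Q R (rotI Q i c) := by
  let L : Chn k Q R 1 →ₗ[k] Chn k Q R 1 := ∑ i ∈ Finset.range (periodP Q c),
    (Finsupp.lapply (edgeGen (hc.rotate_iterate i))).smulRight (edge k Q R (rotI Q i c))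
  refine (LinearMap.eqOn_span (f := LinearMap.id) (g := L) ?_ hz).trans (by simp [L])
  rintro _ ⟨x, h, rfl⟩
  obtain ⟨j, hj⟩ := exists_single_eq_edge k hc h
  rw [← rotI_succ, ← rotI_mod_periodP] at hj
  set a := (j + 1) % periodP Q c
  have ha : a < periodP Q c := Nat.mod_lt _ (periodP_pos hc.1.isAnchored hc.1.2.1)
  simp only [L, hj, LinearMap.id_apply, LinearMap.sum_apply, LinearMap.smulRight_apply,
    Finsupp.lapply_apply, edge_apply k (hc.rotate_iterate a), ite_smul, one_smul, zero_smul]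
  rw [Finset.sum_congr rfl fun i hi => if_congr (rotI_inj ha (Finset.mem_range.mp hi)) rfl rfl,
    Finset.sum_ite_eq, if_pos (Finset.mem_range.mpr ha)]

theorem sub_smul_hCycR_mem_WB (hc : Cocomplete Q R c) {z : Chn k Q R 1}
    (hz : z ∈ WZ k Q R c 1) : z - z (edgeGen hc) • hCycR k Q R 1 c ∈ WB k Q R c 1 := by
  obtain ⟨hzZ, hzW⟩ := Submodule.mem_inf.mp hz
  have hconst : ∀ i, z (edgeGen (hc.rotate_iterate i)) = z (edgeGen hc) := by
    intro i
    induction i with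
    | zero => rfl
    | succ i ih =>
      have h := bd_apply_vtxGen k hc hzW i
      rw [LinearMap.mem_ker.mp hzZ, Finsupp.coe_zero, Pi.zero_apply, eq_comm, sub_eq_zero] at h
      exact h.symm.trans ih
  have hz' : z = z (edgeGen hc) • hCycR k Q R 1 c := by
    conv_lhs => rw [eq_sum_edge_of_mem_Wsp k hc hzW]
    simp only [hconst, hCycR_eq_sum_edge, Finset.smul_sum]
  rw [sub_eq_zero.mpr hz']
  exact zero_mem _

theorem hCycR_rotI (hc : Cocomplete Q R c) (j : ℕ) :
    hCycR k Q R 1 (rotI Q j c) = hCycR k Q R 1 c := by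
  simp only [hCycR_eq_sum_edge, periodP_rotI hc.1.isAnchored hc.1.2.1, ← rotI_add]
  exact (edge_rotI_periodic k c).sum_range_add j

end Circuit

theorem homology_of_cocomplete_circuit_general (k : Type) [Field k] (Q : Quiv)
    (R : Set (Q.A × Q.A)) (c : PathDat Q)
    (hc : Cocomplete Q R c) :
    SubHomSpannedBy k Q R c 0 (bw k Q R 0 (c, (c.1, []))) ∧
    (∀ c' : PathDat Q, IsCycle Q c' → RotEquiv Q c' c →
      bw k Q R 0 (c, (c.1, [])) - bw k Q R 0 (c', (c'.1, [])) ∈ WB k Q R c 0) ∧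
    SubHomSpannedBy k Q R c 1 (hCycR k Q R 1 c) ∧
    (∀ c' : PathDat Q, IsCycle Q c' → RotEquiv Q c' c →
      hCycR k Q R 1 c - hCycR k Q R 1 c' ∈ WB k Q R c 1) ∧
    (∀ m : ℕ, 2 ≤ m → WZ k Q R c m ≤ WB k Q R c m) := by
  refine ⟨⟨⟨Submodule.mem_top, vtx_mem_Wsp k hc 0⟩, vtx_notMem_WB k hc,
      fun z hz => ⟨_, sub_augmentation_smul_vtx_mem_WB k hc hz.2⟩⟩, fun c' hc' h => ?_,
    ⟨hCycR_mem_WZ k hc, hCycR_notMem_WB k hc, fun z hz => ⟨_, sub_smul_hCycR_mem_WB k hc hz⟩⟩,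
    fun c' hc' h => ?_, fun m hm => inf_le_right.trans ((Wsp_eq_bot k hc hm).le.trans bot_le)⟩
  · obtain ⟨j, rfl⟩ := exists_eq_rotP_rotI hc.1.2.1 hc'.isAnchored h
    rw [← rotI_succ, ← neg_sub]
    exact neg_mem (vtx_rotI_sub_vtx_mem_WB k hc (j + 1))
  · obtain ⟨j, rfl⟩ := exists_eq_rotP_rotI hc.1.2.1 hc'.isAnchored h
    rw [← rotI_succ, hCycR_rotI k hc, sub_self]
    exact zero_mem _

/-- Let `(Q, R)` be a quadratic monomial presentation and `C`
the cocomplete circuit of a cocomplete cycle `c`. Then for the subcomplex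
`k(B ⊙ Γ)_C`: (1) `H₀` is one-dimensional, spanned by the class of
`(c, s(c))`, independently of the chosen representative of `C`; (2) `H₁` is
one-dimensional, spanned by the class of
`ĥ(c) = Σ_{i=0}^{r-1} (r1(rot^i c), r2(rot^i c))`, again independently of the
representative; (3) `H_m = 0` for all `m ≥ 2`. -/
theorem homology_of_cocomplete_circuit (k : Type) [Field k] (Q : Quiv)
    (R : Set (Q.A × Q.A)) (hq : IsQuadMon Q R) (c : PathDat Q)
    (hc : Cocomplete Q R c) :
    SubHomSpannedBy k Q R c 0 (bw k Q R 0 (c, (c.1, []))) ∧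
    (∀ c' : PathDat Q, IsCycle Q c' → RotEquiv Q c' c →
      bw k Q R 0 (c, (c.1, [])) - bw k Q R 0 (c', (c'.1, [])) ∈ WB k Q R c 0) ∧
    SubHomSpannedBy k Q R c 1 (hCycR k Q R 1 c) ∧
    (∀ c' : PathDat Q, IsCycle Q c' → RotEquiv Q c' c →
      hCycR k Q R 1 c - hCycR k Q R 1 c' ∈ WB k Q R c 1) ∧
    (∀ m : ℕ, 2 ≤ m → WZ k Q R c m ≤ WB k Q R c m) :=
  homology_of_cocomplete_circuit_general k Q R c hc

end GentleTT
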